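/- Let n ≥ 2, σ > 0, and let s, ŝ ∈ ℝⁿ with s ≠ 0, δ = ‖s − ŝ‖ > 0, and ŝ − s not a scalar multiple of s. Set u = −s/‖s‖, cos θ = (‖s‖² + δ² − ‖ŝ‖²)/(2‖s‖δ) with θ ∈ (0, π), and β(z) = (δ − 2z cos θ)/(2 sin θ) for z ∈ ℝ. Let G be a random vector in ℝⁿ whose coordinates are independent Gaussian with mean 0 and variance σ², and let W = G − ⟨G, u⟩ u be its orthogonal projection onto the hyperplane u^⊥. Then for every z ∈ ℝ, P(‖s + (z u + W) − ŝ‖ ≤ ‖z u + W‖) = Q(β(z)/σ), where Q(x) = ∫_x^∞ (1/√(2π)) e^{−t²/2} dt. -/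

import Mathlib

open MeasureTheory ProbabilityTheory

/-- The distribution of an `n`-dimensional random vector whose coordinates are
independent Gaussian random variables with mean `0` and variance `σ²`. -/
noncomputable def gaussianVec (n : ℕ) (σ : ℝ) : Measure (EuclideanSpace ℝ (Fin n)) :=
  Measure.map (WithLp.toLp 2) (Measure.pi fun _ : Fin n => gaussianReal 0 ⟨σ ^ 2, sq_nonneg σ⟩)

/-- The Gaussian tail function `Q(x) = ∫_x^∞ (1/√(2π)) e^{-t²/2} dt`. -/
noncomputable def Qfun (x : ℝ) : ℝ :=
  ∫ t in Set.Ioi x, (1 / Real.sqrt (2 * Real.pi)) * Real.exp (-(t ^ 2) / 2)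

open Set

/-!
Write `v = s' - s` and `w = v - ⟪u, v⟫ u` for the part of `v` orthogonal to `u`; `w ≠ 0`
because `v` is not parallel to `s`. Expanding squared norms, the event is the half-space
`‖v‖² / 2 - z ⟪u, v⟫ ≤ ⟪g, w⟫`, in which the radial part of `g` has dropped out. Comparing
characteristic functions, `⟪g, w⟫` is centred Gaussian with standard deviation `σ ‖w‖`, so the
probability is `Q((‖v‖² / 2 - z ⟪u, v⟫) / (σ ‖w‖))`. Finally `θ` is the angle between `u`
and `v`: the legs `⟪u, v⟫` and `‖w‖` of the right triangle with hypotenuse `‖v‖` give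
`cos θ = ⟪u, v⟫ / ‖v‖` and `sin θ = ‖w‖ / ‖v‖`, turning the argument into `β z / σ`.
-/

section TangentialDecomposition

variable {E : Type*} [NormedAddCommGroup E] [InnerProductSpace ℝ E]

lemma norm_add_sub_le_norm_iff (s s' x : E) :
    ‖s + x - s'‖ ≤ ‖x‖ ↔ ‖s' - s‖ ^ 2 / 2 ≤ inner ℝ x (s' - s) := by
  rw [show s + x - s' = x - (s' - s) by abel, ← sq_le_sq₀ (norm_nonneg _) (norm_nonneg _),
    norm_sub_sq_real]
  constructor <;> intro h <;> linarith

lemma inner_smul_add_sub_inner_smul (z : ℝ) (u g v : E) :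
    inner ℝ (z • u + (g - inner ℝ g u • u)) v
      = z * inner ℝ u v + inner ℝ g (v - inner ℝ u v • u) := by
  simp only [inner_add_left, inner_sub_left, inner_sub_right, real_inner_smul_left,
    real_inner_smul_right, real_inner_comm u g]
  ring

lemma inner_sq_add_norm_sub_inner_smul_sq {u : E} (hu : ‖u‖ = 1) (v : E) :
    inner ℝ u v ^ 2 + ‖v - inner ℝ u v • u‖ ^ 2 = ‖v‖ ^ 2 := by
  rw [norm_sub_sq_real, real_inner_smul_right, real_inner_comm, norm_smul, Real.norm_eq_abs,
    mul_pow, sq_abs, hu]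
  ring

lemma law_cos_quotient_eq_inner_div_norm {s : E} (hs : s ≠ 0) (s' : E) :
    (‖s‖ ^ 2 + ‖s - s'‖ ^ 2 - ‖s'‖ ^ 2) / (2 * ‖s‖ * ‖s - s'‖)
      = inner ℝ (-(‖s‖⁻¹ • s)) (s' - s) / ‖s' - s‖ := by
  have hs₀ : ‖s‖ ≠ 0 := norm_ne_zero_iff.2 hs
  rw [norm_sub_rev s, norm_sub_sq_real, inner_neg_left, real_inner_smul_left, inner_sub_right,
    real_inner_self_eq_norm_sq, real_inner_comm]
  field_simp
  ring

end TangentialDecomposition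

lemma Real.cos_arccos_div_of_sq_add_sq_eq {q r δ : ℝ} (hδ : 0 < δ)
    (h : q ^ 2 + r ^ 2 = δ ^ 2) : Real.cos (Real.arccos (q / δ)) = q / δ := by
  have hq : |q| ≤ δ := abs_le_of_sq_le_sq (by nlinarith) hδ.le
  rw [abs_le] at hq
  rw [Real.cos_arccos ((le_div_iff₀ hδ).2 (by linarith)) ((div_le_one hδ).2 hq.2)]

lemma Real.sin_arccos_div_of_sq_add_sq_eq {q r δ : ℝ} (hδ : 0 < δ) (hr : 0 ≤ r)
    (h : q ^ 2 + r ^ 2 = δ ^ 2) : Real.sin (Real.arccos (q / δ)) = r / δ := by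
  rw [Real.sin_arccos, ← Real.sqrt_sq (div_nonneg hr hδ.le)]
  congr 1
  field_simp
  linarith

lemma charFun_map_inner {E : Type*} [NormedAddCommGroup E] [InnerProductSpace ℝ E]
    [MeasurableSpace E] [OpensMeasurableSpace E] (μ : Measure E) (w : E) (t : ℝ) :
    charFun (μ.map fun g => inner ℝ g w) t = charFun μ (t • w) := by
  rw [charFun_apply, charFun_apply, integral_map (by fun_prop) (by fun_prop)]
  simp [real_inner_smul_right, mul_comm]

section IIDGaussian

variable {ι : Type*} [Fintype ι]

lemma charFun_map_pi_gaussianReal (v : NNReal) (t : EuclideanSpace ℝ ι) :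
    charFun ((Measure.pi fun _ : ι => gaussianReal 0 v).map (WithLp.toLp 2)) t
      = Complex.exp (-(v * ‖t‖ ^ 2 : ℝ) / 2) := by
  rw [charFun_pi]
  simp only [charFun_gaussianReal]
  rw [← Complex.exp_sum, EuclideanSpace.real_norm_sq_eq]
  push_cast
  simp [Finset.sum_div, Finset.mul_sum, neg_div]

lemma map_inner_map_pi_gaussianReal (v : NNReal) (w : EuclideanSpace ℝ ι) :
    ((Measure.pi fun _ : ι => gaussianReal 0 v).map (WithLp.toLp 2)).map (fun g => inner ℝ g w)
      = gaussianReal 0 (v * ‖w‖₊ ^ 2) := by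
  have : IsProbabilityMeasure
      ((Measure.pi fun _ : ι => gaussianReal 0 v).map (WithLp.toLp 2)) :=
    Measure.isProbabilityMeasure_map (by fun_prop)
  have : IsProbabilityMeasure
      (((Measure.pi fun _ : ι => gaussianReal 0 v).map (WithLp.toLp 2)).map
        (fun g => inner ℝ g w)) :=
    Measure.isProbabilityMeasure_map (by fun_prop)
  refine Measure.ext_of_charFun (funext fun t => ?_)
  rw [charFun_map_inner, charFun_map_pi_gaussianReal, charFun_gaussianReal]
  push_cast [norm_smul, mul_pow, Real.norm_eq_abs, sq_abs]
  ring_nf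

end IIDGaussian

lemma gaussianReal_Ici {v : NNReal} (hv : v ≠ 0) (a : ℝ) :
    gaussianReal 0 v (Ici a) = gaussianReal 0 1 (Ici (a / √v)) := by
  have hsv : 0 < √(v : ℝ) := Real.sqrt_pos.2 (by positivity)
  have hmap : (gaussianReal 0 1).map (√(v : ℝ) * ·) = gaussianReal 0 v := by
    rw [gaussianReal_map_const_mul, mul_zero, mul_one]
    congr 1
    ext1
    simp
  rw [← hmap, Measure.map_apply (by fun_prop) measurableSet_Ici]
  congr 1
  ext x
  simp [div_le_iff₀' hsv]

lemma Qfun_eq_gaussianReal_Ici (x : ℝ) : Qfun x = (gaussianReal 0 1 (Ici x)).toReal := by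
  rw [gaussianReal_apply_eq_integral 0 one_ne_zero, integral_Ici_eq_integral_Ioi,
    ENNReal.toReal_ofReal
      (setIntegral_nonneg measurableSet_Ioi fun _ _ => gaussianPDFReal_nonneg _ _ _)]
  simp [Qfun, gaussianPDFReal]

/-- Restates `gaussianVec` with `NNReal.mk`: the anonymous constructor in its definition is a
`Subtype` term, on which rewriting with `NNReal` lemmas fails. -/
lemma gaussianVec_eq_map_pi (n : ℕ) (σ : ℝ) :
    gaussianVec n σ =
      (Measure.pi fun _ : Fin n => gaussianReal 0 (.mk (σ ^ 2) (sq_nonneg σ))).map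
        (WithLp.toLp 2) :=
  rfl

lemma gaussianVec_le_inner_toReal {n : ℕ} {σ : ℝ} (hσ : 0 < σ) {w : EuclideanSpace ℝ (Fin n)}
    (hw : w ≠ 0) (c : ℝ) :
    (gaussianVec n σ {g | c ≤ inner ℝ g w}).toReal = Qfun (c / (σ * ‖w‖)) := by
  have hvar : NNReal.mk (σ ^ 2) (sq_nonneg σ) * ‖w‖₊ ^ 2 ≠ 0 := by
    rw [← NNReal.coe_ne_zero]
    simp [hσ.ne', hw]
  have hsqrt : √(NNReal.mk (σ ^ 2) (sq_nonneg σ) * ‖w‖₊ ^ 2 : NNReal) = σ * ‖w‖ := by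
    rw [NNReal.coe_mul, NNReal.coe_mk, NNReal.coe_pow, coe_nnnorm, ← mul_pow,
      Real.sqrt_sq (by positivity)]
  rw [show {g | c ≤ inner ℝ g w} = (fun g => inner ℝ g w) ⁻¹' Ici c from rfl,
    ← Measure.map_apply (by fun_prop) measurableSet_Ici, gaussianVec_eq_map_pi,
    map_inner_map_pi_gaussianReal, gaussianReal_Ici hvar, hsqrt, Qfun_eq_gaussianReal_Ici]

theorem tangential_bound_conditional_pairwise_general
    (n : ℕ) (σ : ℝ) (hσ : 0 < σ)
    (s s' : EuclideanSpace ℝ (Fin n)) (hs : s ≠ 0)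
    (hncol : ∀ t : ℝ, s' - s ≠ t • s)
    (u : EuclideanSpace ℝ (Fin n)) (hu : u = -(‖s‖⁻¹ • s))
    (θ : ℝ)
    (hθ : θ = Real.arccos
      ((‖s‖ ^ 2 + ‖s - s'‖ ^ 2 - ‖s'‖ ^ 2) / (2 * ‖s‖ * ‖s - s'‖)))
    (β : ℝ → ℝ)
    (hβ : ∀ z, β z = (‖s - s'‖ - 2 * z * Real.cos θ) / (2 * Real.sin θ))
    (z : ℝ) :
    (gaussianVec n σ
        {g | ‖s + (z • u + (g - (inner ℝ g u : ℝ) • u)) - s'‖ ≤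
          ‖z • u + (g - (inner ℝ g u : ℝ) • u)‖}).toReal = Qfun (β z / σ) := by
  rw [law_cos_quotient_eq_inner_div_norm hs, ← hu] at hθ
  simp_rw [norm_sub_rev s s'] at hβ
  set v := s' - s
  set q := inner ℝ u v
  set w := v - q • u
  have hδ : 0 < ‖v‖ := norm_pos_iff.2 (by simpa using hncol 0)
  have hu₁ : ‖u‖ = 1 := by simp [hu, norm_smul, hs]
  have hw : w ≠ 0 := fun h => hncol (-(q * ‖s‖⁻¹)) <| by
    rw [sub_eq_zero.1 h, hu, smul_neg, ← neg_smul, smul_smul, neg_mul]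
  have hpyth := inner_sq_add_norm_sub_inner_smul_sq hu₁ v
  have hcos : Real.cos θ = q / ‖v‖ := hθ ▸ Real.cos_arccos_div_of_sq_add_sq_eq hδ hpyth
  have hsin : Real.sin θ = ‖w‖ / ‖v‖ :=
    hθ ▸ Real.sin_arccos_div_of_sq_add_sq_eq hδ (norm_nonneg w) hpyth
  have hevent : {g | ‖s + (z • u + (g - (inner ℝ g u : ℝ) • u)) - s'‖ ≤
      ‖z • u + (g - (inner ℝ g u : ℝ) • u)‖} = {g | ‖v‖ ^ 2 / 2 - z * q ≤ inner ℝ g w} := by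
    ext g
    rw [mem_ofPred_eq, mem_ofPred_eq, norm_add_sub_le_norm_iff, inner_smul_add_sub_inner_smul,
      sub_le_iff_le_add']
  rw [hevent, gaussianVec_le_inner_toReal hσ hw, hβ, hcos, hsin]
  have hw₀ : ‖w‖ ≠ 0 := norm_ne_zero_iff.2 hw
  field_simp

/-- **Conditional pair-wise error probability of the tangential bound.**
Decompose the Gaussian noise into the radial component (along `u = -s/‖s‖`)
and the tangential component `W = G - ⟪G, u⟫ u`. With `δ = ‖s - s'‖`,
`cos θ = (‖s‖² + δ² - ‖s'‖²)/(2‖s‖δ)` (`θ ∈ (0, π)` since `s' - s` is not a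
scalar multiple of `s`), and `β(z) = (δ - 2z cos θ)/(2 sin θ)`, conditioning
the radial component on the value `z` gives
`P(‖s + (z u + W) - s'‖ ≤ ‖z u + W‖) = Q(β(z)/σ)`. -/
theorem tangential_bound_conditional_pairwise
    (n : ℕ) (hn : 2 ≤ n) (σ : ℝ) (hσ : 0 < σ)
    (s s' : EuclideanSpace ℝ (Fin n)) (hs : s ≠ 0) (hne : s ≠ s')
    (hncol : ∀ t : ℝ, s' - s ≠ t • s)
    (u : EuclideanSpace ℝ (Fin n)) (hu : u = -(‖s‖⁻¹ • s))
    (θ : ℝ)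
    (hθ : θ = Real.arccos
      ((‖s‖ ^ 2 + ‖s - s'‖ ^ 2 - ‖s'‖ ^ 2) / (2 * ‖s‖ * ‖s - s'‖)))
    (β : ℝ → ℝ)
    (hβ : ∀ z, β z = (‖s - s'‖ - 2 * z * Real.cos θ) / (2 * Real.sin θ))
    (z : ℝ) :
    (gaussianVec n σ
        {g | ‖s + (z • u + (g - (inner ℝ g u : ℝ) • u)) - s'‖ ≤
          ‖z • u + (g - (inner ℝ g u : ℝ) • u)‖}).toReal = Qfun (β z / σ) :=
  tangential_bound_conditional_pairwise_general n σ hσ s s' hs hncol u hu θ hθ β hβ z
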